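/- For m ≥ 0 and 0 < β ≤ 1, define I_m(β) = ∫₀^∞∫₀^∞ exp(-(r - r')²/2 - β r r') (rr')^m dr dr'. Then I_m(β) ≤ (√(2π)/2) · β^{-m-1/2} · Γ(m + 1/2), and there exists an absolute constant b₀ > 0 (independent of m and β) such that I_m(β) ≥ b₀ · β^{-m-1/2} · Γ(m + 1/2) for all m ≥ 0 and 0 < β ≤ 1. -/

import Mathlib

/-!
Substituting `r' = p / r` in the inner integral turns `I_m(β)` into
`∫₀^∞ e^{-βp} p^m G(p) dp` with `G(p) = ∫₀^∞ r⁻¹ e^{-(r - p/r)²/2} dr` (`productKernel`).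
By AM-GM, `r⁻¹ ≤ (1 + p/r²) / (2√p)`, and `w = r - p/r` maps `(0, ∞)` onto `ℝ` with
`dw = (1 + p/r²) dr`, so `G(p) ≤ √(2π) / (2√p)`; on `(√p, √p + 1]` we have
`0 ≤ r - p/r ≤ 2`, so `G(p) ≥ e^{-2} / (√p + 1)`. What remains are Gamma integrals
`∫ p^{s-1} e^{-βp} = β^{-s} Γ(s)` with `s = m + 1/2`. For the lower bound the range `p ≤ 1/16`,
where `√p + 1 ≤ 5√p` fails, is discarded: it carries at most `(1/16)^s / s ≤ 3/4 Γ(s)`,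
because `s Γ(s) = Γ(s + 1) ≥ 1/e`.
-/

open MeasureTheory Real

/-- The function `I_m(β)`. -/
noncomputable def Ifun (m β : ℝ) : ℝ :=
  ∫ r in Set.Ioi (0 : ℝ), ∫ r' in Set.Ioi (0 : ℝ),
    Real.exp (-(r - r') ^ 2 / 2 - β * r * r') * (r * r') ^ m

open Set
open scoped ENNReal

theorem integral_integral_eq_toReal_lintegral_lintegral {α β : Type*} [MeasurableSpace α]
    [MeasurableSpace β] {μ : Measure α} {ν : Measure β} [SFinite ν] {f : α → β → ℝ}
    (hf : Measurable (Function.uncurry f)) (hf_nonneg : ∀ᵐ x ∂μ, 0 ≤ᵐ[ν] f x)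
    (hfin : ∫⁻ x, ∫⁻ y, ENNReal.ofReal (f x y) ∂ν ∂μ ≠ ∞) :
    ∫ x, ∫ y, f x y ∂ν ∂μ = (∫⁻ x, ∫⁻ y, ENNReal.ofReal (f x y) ∂ν ∂μ).toReal := by
  have hF := (ENNReal.measurable_ofReal.comp hf).lintegral_prod_right' (ν := ν)
  calc ∫ x, ∫ y, f x y ∂ν ∂μ
      = ∫ x, (∫⁻ y, ENNReal.ofReal (f x y) ∂ν).toReal ∂μ :=
        integral_congr_ae <| hf_nonneg.mono fun x hx =>
          integral_eq_lintegral_of_nonneg_ae hx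
            (hf.comp measurable_prodMk_left).aestronglyMeasurable
    _ = _ := integral_toReal hF.aemeasurable (ae_lt_top hF hfin)

theorem lintegral_Ioi_comp_mul_left {a : ℝ} (ha : 0 < a) (g : ℝ → ℝ≥0∞) :
    ∫⁻ x in Ioi 0, g (a * x) = ∫⁻ y in Ioi 0, ENNReal.ofReal a⁻¹ * g y := by
  have hder : ∀ y ∈ Ioi (0 : ℝ), HasDerivWithinAt (a⁻¹ * ·) a⁻¹ (Ioi 0) y := fun y _ =>
    by simpa using ((hasDerivAt_id y).const_mul a⁻¹).hasDerivWithinAt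
  have hinj : InjOn (a⁻¹ * ·) (Ioi 0) := (mul_right_injective₀ (inv_ne_zero ha.ne')).injOn
  calc ∫⁻ x in Ioi 0, g (a * x) = ∫⁻ x in (a⁻¹ * ·) '' Ioi 0, g (a * x) := by
        rw [image_mul_left_Ioi (inv_pos.mpr ha), mul_zero]
    _ = ∫⁻ y in Ioi 0, ENNReal.ofReal a⁻¹ * g y := by
        rw [lintegral_image_eq_lintegral_abs_deriv_mul measurableSet_Ioi hder hinj,
          abs_of_pos (inv_pos.mpr ha)]
        simp_rw [mul_inv_cancel_left₀ ha.ne']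

theorem lintegral_ofReal_exp_neg_sq_div_two :
    ∫⁻ w : ℝ, ENNReal.ofReal (exp (-w ^ 2 / 2)) = ENNReal.ofReal √(2 * π) := by
  have h : (fun w : ℝ => exp (-w ^ 2 / 2)) = fun w => exp (-(1 / 2) * w ^ 2) := by
    ext w; ring_nf
  rw [← ofReal_integral_eq_lintegral_ofReal, h, integral_gaussian]
  · norm_num [div_div_eq_mul_div, mul_comm]
  · rw [h]; exact integrable_exp_neg_mul_sq (by norm_num)
  · exact ae_of_all _ fun w => (exp_pos _).le

theorem strictMonoOn_sub_div {p : ℝ} (hp : 0 ≤ p) :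
    StrictMonoOn (fun r : ℝ => r - p / r) (Ioi 0) :=
  fun a ha b _ hab => by
    simp only; linarith [div_le_div_of_nonneg_left hp ha hab.le]

theorem image_sub_div_Ioi {p : ℝ} (hp : 0 < p) : (fun r : ℝ => r - p / r) '' Ioi 0 = univ := by
  refine eq_univ_of_forall fun w => ?_
  -- the positive root of `r ^ 2 - w r - p = 0`
  set d := √(w ^ 2 + 4 * p)
  have hd : d ^ 2 = w ^ 2 + 4 * p := sq_sqrt (by positivity)
  have hwd : |w| < d := abs_lt_of_sq_lt_sq (by rw [hd]; linarith) (sqrt_nonneg _)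
  have hr : 0 < (w + d) / 2 := by linarith [neg_abs_le w]
  refine ⟨(w + d) / 2, hr, ?_⟩
  have : p / ((w + d) / 2) = (w + d) / 2 - w := by
    rw [div_eq_iff hr.ne']
    nlinarith
  simp only [this]
  ring

theorem lintegral_Ioi_mul_comp_sub_div {p : ℝ} (hp : 0 < p) (g : ℝ → ℝ≥0∞) :
    ∫⁻ r in Ioi 0, ENNReal.ofReal (1 + p / r ^ 2) * g (r - p / r) = ∫⁻ w, g w := by
  have hder : ∀ r ∈ Ioi (0 : ℝ),
      HasDerivWithinAt (fun r => r - p / r) (1 + p / r ^ 2) (Ioi 0) r := by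
    intro r hr
    have := (hasDerivAt_id r).sub ((hasDerivAt_inv (ne_of_gt hr)).const_mul p)
    refine (this.congr_deriv ?_).hasDerivWithinAt.congr_of_mem (fun x _ => ?_) hr
    · simp only [mul_neg, sub_neg_eq_add]; ring
    · simp [div_eq_mul_inv]
  conv_rhs => rw [← setLIntegral_univ, ← image_sub_div_Ioi hp]
  rw [lintegral_image_eq_lintegral_abs_deriv_mul measurableSet_Ioi hder
      (strictMonoOn_sub_div hp.le).injOn]
  refine (setLIntegral_congr_fun measurableSet_Ioi fun r (hr : 0 < r) => ?_).symm
  rw [abs_of_pos (by positivity)]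

noncomputable def productKernel (p : ℝ) : ℝ≥0∞ :=
  ∫⁻ r in Ioi 0, ENNReal.ofReal (r⁻¹ * exp (-(r - p / r) ^ 2 / 2))

theorem productKernel_le {p : ℝ} (hp : 0 < p) :
    productKernel p ≤ ENNReal.ofReal (√(2 * π) / (2 * √p)) := by
  have hsp : 0 < √p := sqrt_pos.mpr hp
  have amgm : ∀ r : ℝ, 0 < r → r⁻¹ ≤ (2 * √p)⁻¹ * (1 + p / r ^ 2) := by
    intro r hr
    rw [← sub_nonneg]
    have : (2 * √p)⁻¹ * (1 + p / r ^ 2) - r⁻¹ = (r - √p) ^ 2 / (2 * √p * r ^ 2) := by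
      field_simp
      linear_combination -sq_sqrt hp.le
    rw [this]
    positivity
  calc productKernel p
      ≤ ∫⁻ r in Ioi 0, ENNReal.ofReal (2 * √p)⁻¹ *
          (ENNReal.ofReal (1 + p / r ^ 2) * ENNReal.ofReal (exp (-(r - p / r) ^ 2 / 2))) := by
        refine setLIntegral_mono' measurableSet_Ioi fun r (hr : 0 < r) => ?_
        rw [← ENNReal.ofReal_mul (by positivity), ← ENNReal.ofReal_mul (by positivity),
          ← mul_assoc]
        exact ENNReal.ofReal_le_ofReal
          (mul_le_mul_of_nonneg_right (amgm r hr) (exp_pos _).le)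
    _ = ENNReal.ofReal (√(2 * π) / (2 * √p)) := by
        rw [lintegral_const_mul' _ _ ENNReal.ofReal_ne_top,
          lintegral_Ioi_mul_comp_sub_div hp fun w => ENNReal.ofReal (exp (-w ^ 2 / 2)),
          lintegral_ofReal_exp_neg_sq_div_two, ← ENNReal.ofReal_mul (by positivity),
          inv_mul_eq_div]

theorem exp_neg_two_div_le_productKernel {p : ℝ} (hp : 0 < p) :
    ENNReal.ofReal (exp (-2) / (√p + 1)) ≤ productKernel p := by
  have hsp : 0 < √p := sqrt_pos.mpr hp
  have hbound : ∀ r ∈ Ioc √p (√p + 1),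
      exp (-2) / (√p + 1) ≤ r⁻¹ * exp (-(r - p / r) ^ 2 / 2) := by
    rintro r ⟨hr₁, hr₂⟩
    have hr : 0 < r := hsp.trans hr₁
    have hw : r - p / r = (r - √p) * (1 + √p / r) := by
      field_simp
      linear_combination (sq_sqrt hp.le)
    have h₁ : 0 ≤ r - √p := by linarith
    have h₂ : r - √p ≤ 1 := by linarith
    have h₃ : 1 + √p / r ≤ 2 := by
      linarith [div_le_one_of_le₀ hr₁.le hr.le]
    have hw₀ : 0 ≤ r - p / r := by rw [hw]; positivity
    have hw₂ : r - p / r ≤ 2 := by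
      rw [hw]; nlinarith
    rw [div_eq_inv_mul]
    gcongr
    nlinarith
  calc ENNReal.ofReal (exp (-2) / (√p + 1))
      = ∫⁻ r in Ioc √p (√p + 1), ENNReal.ofReal (exp (-2) / (√p + 1)) := by
        simp
    _ ≤ ∫⁻ r in Ioc √p (√p + 1), ENNReal.ofReal (r⁻¹ * exp (-(r - p / r) ^ 2 / 2)) :=
        setLIntegral_mono' measurableSet_Ioc fun r hr => ENNReal.ofReal_le_ofReal (hbound r hr)
    _ ≤ productKernel p :=
        lintegral_mono_set fun r hr => hsp.trans hr.1

theorem exp_neg_two_div_five_mul_sqrt_le_productKernel {p : ℝ} (hp : 1 / 16 ≤ p) :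
    ENNReal.ofReal (exp (-2) / (5 * √p)) ≤ productKernel p := by
  have hsp : 1 / 4 ≤ √p := le_sqrt_of_sq_le (by linarith)
  refine le_trans (ENNReal.ofReal_le_ofReal ?_) (exp_neg_two_div_le_productKernel (by linarith))
  gcongr
  linarith

theorem lintegral_lintegral_eq_lintegral_mul_productKernel (m β : ℝ) :
    ∫⁻ r in Ioi 0, ∫⁻ r' in Ioi 0,
        ENNReal.ofReal (exp (-(r - r') ^ 2 / 2 - β * r * r') * (r * r') ^ m) =
      ∫⁻ p in Ioi 0, ENNReal.ofReal (p ^ m * exp (-(β * p))) * productKernel p := by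
  calc ∫⁻ r in Ioi 0, ∫⁻ r' in Ioi 0,
        ENNReal.ofReal (exp (-(r - r') ^ 2 / 2 - β * r * r') * (r * r') ^ m)
      = ∫⁻ r in Ioi 0, ∫⁻ p in Ioi 0, ENNReal.ofReal r⁻¹ *
          ENNReal.ofReal (exp (-(r - p / r) ^ 2 / 2 - β * p) * p ^ m) := by
        refine setLIntegral_congr_fun measurableSet_Ioi fun r (hr : 0 < r) => ?_
        rw [← lintegral_Ioi_comp_mul_left hr]
        simp only [mul_div_cancel_left₀ _ hr.ne', mul_assoc]
    _ = ∫⁻ p in Ioi 0, ∫⁻ r in Ioi 0, ENNReal.ofReal r⁻¹ *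
          ENNReal.ofReal (exp (-(r - p / r) ^ 2 / 2 - β * p) * p ^ m) :=
        lintegral_lintegral_swap (by fun_prop)
    _ = ∫⁻ p in Ioi 0, ENNReal.ofReal (p ^ m * exp (-(β * p))) * productKernel p := by
        refine setLIntegral_congr_fun measurableSet_Ioi fun p (hp : 0 < p) => ?_
        rw [productKernel, ← lintegral_const_mul' _ _ ENNReal.ofReal_ne_top]
        refine setLIntegral_congr_fun measurableSet_Ioi fun r (hr : 0 < r) => ?_
        rw [← ENNReal.ofReal_mul (by positivity), ← ENNReal.ofReal_mul (by positivity),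
          sub_eq_add_neg _ (β * p), exp_add]
        ring_nf

theorem integrableOn_rpow_mul_exp_neg_mul_Ioi {s β : ℝ} (hs : 0 < s) (hβ : 0 < β) :
    IntegrableOn (fun p : ℝ => p ^ (s - 1) * exp (-(β * p))) (Ioi 0) := by
  simpa using integrableOn_rpow_mul_exp_neg_mul_rpow (p := 1) (by linarith) one_pos hβ

theorem lintegral_rpow_mul_exp_neg_mul_Ioi {s β : ℝ} (hs : 0 < s) (hβ : 0 < β) :
    ∫⁻ p in Ioi 0, ENNReal.ofReal (p ^ (s - 1) * exp (-(β * p))) =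
      ENNReal.ofReal (β ^ (-s) * Gamma s) := by
  rw [← ofReal_integral_eq_lintegral_ofReal (integrableOn_rpow_mul_exp_neg_mul_Ioi hs hβ)
    ((ae_restrict_iff' measurableSet_Ioi).mpr (ae_of_all _ fun p (hp : 0 < p) => by positivity)),
    integral_rpow_mul_exp_neg_mul_Ioi hs hβ, one_div, inv_rpow hβ.le, rpow_neg hβ.le]

theorem exp_neg_one_le_Gamma {s : ℝ} (hs : 1 ≤ s) : exp (-1) ≤ Gamma s := by
  have hs₀ : 0 < s := by linarith
  have hint := GammaIntegral_convergent hs₀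
  calc exp (-1) = ∫ t in Ioi 1, exp (-t) := (integral_exp_neg_Ioi 1).symm
    _ ≤ ∫ t in Ioi 1, exp (-t) * t ^ (s - 1) := by
        refine setIntegral_mono_on (by simpa using exp_neg_integrableOn_Ioi 1 one_pos)
          (hint.mono_set (Ioi_subset_Ioi zero_le_one)) measurableSet_Ioi fun t (ht : 1 < t) => ?_
        exact le_mul_of_one_le_right (exp_pos _).le (one_le_rpow ht.le (by linarith))
    _ ≤ ∫ t in Ioi 0, exp (-t) * t ^ (s - 1) :=
        setIntegral_mono_set hint
          ((ae_restrict_iff' measurableSet_Ioi).mpr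
            (ae_of_all _ fun t (ht : 0 < t) => by positivity))
          (Ioi_subset_Ioi zero_le_one).eventuallyLE
    _ = Gamma s := (Gamma_eq_integral hs₀).symm

theorem integral_Ioc_rpow_mul_exp_neg_mul_le {s β : ℝ} (hs : 1 / 2 ≤ s) (hβ : 0 < β) :
    ∫ p in Ioc 0 (1 / 16), p ^ (s - 1) * exp (-(β * p)) ≤ 3 / 4 * Gamma s := by
  have hs₀ : 0 < s := by linarith
  have hsmall : (1 / 16 : ℝ) ^ s ≤ 1 / 4 :=
    calc (1 / 16 : ℝ) ^ s ≤ (1 / 16) ^ (1 / 2 : ℝ) :=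
          rpow_le_rpow_of_exponent_ge (by norm_num) (by norm_num) hs
      _ = 1 / 4 := by
          rw [show (1 / 16 : ℝ) = (1 / 4) ^ (2 : ℝ) by norm_num, ← rpow_mul (by norm_num)]
          norm_num
  have he : 1 / 3 ≤ exp (-1) := by
    rw [exp_neg, one_div]
    exact inv_anti₀ (exp_pos 1) (by linarith [exp_one_lt_d9])
  calc ∫ p in Ioc 0 (1 / 16), p ^ (s - 1) * exp (-(β * p))
      ≤ ∫ p in Ioc 0 (1 / 16), p ^ (s - 1) :=
        setIntegral_mono_on
          ((integrableOn_rpow_mul_exp_neg_mul_Ioi hs₀ hβ).mono_set Ioc_subset_Ioi_self)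
          (intervalIntegral.intervalIntegrable_rpow' (by linarith)).1
          measurableSet_Ioc fun p hp =>
            mul_le_of_le_one_right (rpow_nonneg hp.1.le _)
              (exp_le_one_iff.mpr (by nlinarith [hp.1]))
    _ = (1 / 16) ^ s / s := by
        rw [← intervalIntegral.integral_of_le (by norm_num), integral_rpow (Or.inl (by linarith)),
          sub_add_cancel, zero_rpow hs₀.ne']
        ring
    _ ≤ 3 / 4 * Gamma (s + 1) / s := by
        gcongr
        linarith [exp_neg_one_le_Gamma (s := s + 1) (by linarith)]
    _ = 3 / 4 * Gamma s := by rw [Gamma_add_one hs₀.ne']; field_simp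

theorem rpow_neg_mul_Gamma_le_four_mul_integral_Ioi {s β : ℝ} (hs : 1 / 2 ≤ s) (hβ : 0 < β)
    (hβ₁ : β ≤ 1) :
    β ^ (-s) * Gamma s ≤ 4 * ∫ p in Ioi (1 / 16), p ^ (s - 1) * exp (-(β * p)) := by
  have hs₀ : 0 < s := by linarith
  have hint := integrableOn_rpow_mul_exp_neg_mul_Ioi hs₀ hβ
  have hsplit : ∫ p in Ioi 0, p ^ (s - 1) * exp (-(β * p)) =
      (∫ p in Ioc 0 (1 / 16), p ^ (s - 1) * exp (-(β * p))) +
        ∫ p in Ioi (1 / 16), p ^ (s - 1) * exp (-(β * p)) := by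
    rw [← setIntegral_union Ioc_disjoint_Ioi_same measurableSet_Ioi
      (hint.mono_set Ioc_subset_Ioi_self) (hint.mono_set (Ioi_subset_Ioi (by norm_num))),
      Ioc_union_Ioi_eq_Ioi (by norm_num)]
  rw [integral_rpow_mul_exp_neg_mul_Ioi hs₀ hβ, one_div, inv_rpow hβ.le, ← rpow_neg hβ.le]
    at hsplit
  have hΓ : Gamma s ≤ β ^ (-s) * Gamma s :=
    le_mul_of_one_le_left (Gamma_pos_of_pos hs₀).le
      (one_le_rpow_of_pos_of_le_one_of_nonpos hβ hβ₁ (by linarith))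
  linarith [integral_Ioc_rpow_mul_exp_neg_mul_le hs hβ]

noncomputable def kernelIntegral (m β : ℝ) : ℝ≥0∞ :=
  ∫⁻ p in Ioi 0, ENNReal.ofReal (p ^ m * exp (-(β * p))) * productKernel p

theorem Ifun_eq_toReal_kernelIntegral {m β : ℝ} (h : kernelIntegral m β ≠ ∞) :
    Ifun m β = (kernelIntegral m β).toReal := by
  rw [kernelIntegral, ← lintegral_lintegral_eq_lintegral_mul_productKernel] at h ⊢
  refine integral_integral_eq_toReal_lintegral_lintegral (by fun_prop) ?_ h
  filter_upwards [ae_restrict_mem measurableSet_Ioi] with r (hr : 0 < r)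
  filter_upwards [ae_restrict_mem measurableSet_Ioi] with r' (hr' : 0 < r')
  positivity

theorem rpow_add_one_half_sub_one {p : ℝ} (hp : 0 < p) (m : ℝ) :
    p ^ (m + 1 / 2 - 1) = p ^ m / √p := by
  rw [sqrt_eq_rpow, ← rpow_sub hp]
  ring_nf

theorem kernelIntegral_le {m β : ℝ} (hm : -(1 / 2) < m) (hβ : 0 < β) :
    kernelIntegral m β ≤
      ENNReal.ofReal (√(2 * π) / 2 * (β ^ (-m - 1 / 2) * Gamma (m + 1 / 2))) := by
  calc kernelIntegral m β
      ≤ ∫⁻ p in Ioi 0, ENNReal.ofReal (√(2 * π) / 2) *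
          ENNReal.ofReal (p ^ (m + 1 / 2 - 1) * exp (-(β * p))) := by
        refine setLIntegral_mono' measurableSet_Ioi fun p (hp : 0 < p) => ?_
        calc ENNReal.ofReal (p ^ m * exp (-(β * p))) * productKernel p
            ≤ ENNReal.ofReal (p ^ m * exp (-(β * p))) *
                ENNReal.ofReal (√(2 * π) / (2 * √p)) := by
              gcongr
              exact productKernel_le hp
          _ = _ := by
              rw [← ENNReal.ofReal_mul (by positivity), ← ENNReal.ofReal_mul (by positivity),
                rpow_add_one_half_sub_one hp]
              ring_nf
    _ = _ := by
        rw [lintegral_const_mul' _ _ ENNReal.ofReal_ne_top,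
          lintegral_rpow_mul_exp_neg_mul_Ioi (by linarith) hβ,
          ← ENNReal.ofReal_mul (by positivity), neg_add']

theorem le_kernelIntegral {m β : ℝ} (hm : 0 ≤ m) (hβ : 0 < β) (hβ₁ : β ≤ 1) :
    ENNReal.ofReal (exp (-2) / 20 * (β ^ (-m - 1 / 2) * Gamma (m + 1 / 2))) ≤
      kernelIntegral m β := by
  have hint : IntegrableOn (fun p : ℝ => p ^ (m + 1 / 2 - 1) * exp (-(β * p))) (Ioi (1 / 16)) :=
    (integrableOn_rpow_mul_exp_neg_mul_Ioi (by linarith) hβ).mono_set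
      (Ioi_subset_Ioi (by norm_num))
  calc ENNReal.ofReal (exp (-2) / 20 * (β ^ (-m - 1 / 2) * Gamma (m + 1 / 2)))
      ≤ ENNReal.ofReal (exp (-2) / 5 *
          ∫ p in Ioi (1 / 16), p ^ (m + 1 / 2 - 1) * exp (-(β * p))) := by
        refine ENNReal.ofReal_le_ofReal ?_
        have h := rpow_neg_mul_Gamma_le_four_mul_integral_Ioi (s := m + 1 / 2)
          (by linarith) hβ hβ₁
        rw [neg_add'] at h
        nlinarith [exp_pos (-2)]
    _ = ∫⁻ p in Ioi (1 / 16), ENNReal.ofReal (exp (-2) / 5) *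
          ENNReal.ofReal (p ^ (m + 1 / 2 - 1) * exp (-(β * p))) := by
        have hnonneg : 0 ≤ᵐ[volume.restrict (Ioi (1 / 16))]
            fun p : ℝ => p ^ (m + 1 / 2 - 1) * exp (-(β * p)) := by
          filter_upwards [ae_restrict_mem measurableSet_Ioi] with p (hp : 1 / 16 < p)
          have : 0 < p := by linarith
          positivity
        rw [lintegral_const_mul' _ _ ENNReal.ofReal_ne_top,
          ← ofReal_integral_eq_lintegral_ofReal hint hnonneg, ENNReal.ofReal_mul (by positivity)]
    _ ≤ ∫⁻ p in Ioi (1 / 16), ENNReal.ofReal (p ^ m * exp (-(β * p))) * productKernel p := by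
        refine setLIntegral_mono' measurableSet_Ioi fun p (hp : 1 / 16 < p) => ?_
        have hp₀ : 0 < p := by linarith
        calc ENNReal.ofReal (exp (-2) / 5) * ENNReal.ofReal (p ^ (m + 1 / 2 - 1) * exp (-(β * p)))
            = ENNReal.ofReal (p ^ m * exp (-(β * p))) *
                ENNReal.ofReal (exp (-2) / (5 * √p)) := by
              rw [← ENNReal.ofReal_mul (by positivity), ← ENNReal.ofReal_mul (by positivity),
                rpow_add_one_half_sub_one hp₀]
              ring_nf
          _ ≤ _ := by
              gcongr
              exact exp_neg_two_div_five_mul_sqrt_le_productKernel hp.le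
    _ ≤ kernelIntegral m β := lintegral_mono_set (Ioi_subset_Ioi (by norm_num))

theorem Ifun_le {m β : ℝ} (hm : -(1 / 2) < m) (hβ : 0 < β) :
    Ifun m β ≤ √(2 * π) / 2 * β ^ (-m - 1 / 2) * Gamma (m + 1 / 2) := by
  have h := kernelIntegral_le hm hβ
  rw [Ifun_eq_toReal_kernelIntegral (ne_top_of_le_ne_top ENNReal.ofReal_ne_top h), mul_assoc]
  have hΓ := Gamma_pos_of_pos (show 0 < m + 1 / 2 by linarith)
  exact ENNReal.toReal_le_of_le_ofReal (by positivity) h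

theorem le_Ifun {m β : ℝ} (hm : 0 ≤ m) (hβ : 0 < β) (hβ₁ : β ≤ 1) :
    exp (-2) / 20 * β ^ (-m - 1 / 2) * Gamma (m + 1 / 2) ≤ Ifun m β := by
  have hfin :=
    ne_top_of_le_ne_top ENNReal.ofReal_ne_top (kernelIntegral_le (m := m) (by linarith) hβ)
  rw [Ifun_eq_toReal_kernelIntegral hfin, mul_assoc]
  exact (ENNReal.ofReal_le_iff_le_toReal hfin).mp (le_kernelIntegral hm hβ hβ₁)

/-- Two-sided bounds: `I_m(β) ≤ (√(2π)/2) β^{-m-1/2} Γ(m+1/2)` and there exists an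
absolute constant `b₀ > 0` with `I_m(β) ≥ b₀ β^{-m-1/2} Γ(m+1/2)`, for all
`m ≥ 0` and `0 < β ≤ 1`. -/
theorem statement6 :
    (∀ m : ℝ, 0 ≤ m → ∀ β : ℝ, 0 < β → β ≤ 1 →
      Ifun m β ≤ Real.sqrt (2 * π) / 2 * β ^ (-m - 1 / 2) * Real.Gamma (m + 1 / 2)) ∧
    ∃ b₀ : ℝ, 0 < b₀ ∧ ∀ m : ℝ, 0 ≤ m → ∀ β : ℝ, 0 < β → β ≤ 1 →
      b₀ * β ^ (-m - 1 / 2) * Real.Gamma (m + 1 / 2) ≤ Ifun m β :=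
  ⟨fun m hm β hβ _ => Ifun_le (by linarith) hβ,
    ⟨exp (-2) / 20, by positivity, fun m hm β hβ hβ₁ => le_Ifun hm hβ hβ₁⟩⟩
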